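/- arXiv:1807.05374 — 5 statements merged into one kernel-verified Lean document; each statement's English description precedes it below -/
import Mathlib

section
/- Let G be a graph on n vertices with arboricity at most λ and let d > 2λ. In the H-partition produced by the peeling algorithm, for every i ≥ 1, the number of vertices in layers of index at least i is at most n·(2λ/d)^{i-1}. -/
def HasArboricityAtMost {V : Type*} (G : SimpleGraph V) (lam : ℕ) : Prop :=
  ∃ F : Fin lam → SimpleGraph V,
    (∀ i, (F i).IsAcyclic) ∧ (∀ i, F i ≤ G) ∧
    (∀ e ∈ G.edgeSet, ∃! i, e ∈ (F i).edgeSet)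

/-- The greedy peeling process: `peel G d i` is the set of vertices remaining after
`i` rounds (equivalently, the set of vertices in layers of index at least `i+1`,
1-indexed); each round removes all vertices of remaining degree at most `d`. -/
def peel {V : Type*} [Fintype V] [DecidableEq V] (G : SimpleGraph V)
    [DecidableRel G.Adj] (d : ℕ) : ℕ → Finset V
  | 0 => Finset.univ
  | i + 1 => (peel G d i).filter (fun v => d < (G.neighborFinset v ∩ peel G d i).card)

/-!
Every vertex surviving round `i + 1` of the peeling has more than `d` neighbours among the
survivors `S` of round `i`, so `d` times the number of survivors is at most the degree sum of the
subgraph induced by `S`. A forest on `S` extends to a spanning tree of the complete graph on `S`,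
so it has fewer than `|S|` edges, and a graph covered by `λ` forests therefore has degree sum at
most `2λ|S|` on every induced subgraph. Each round thus shrinks the survivors by a factor `2λ/d`.
-/

open Finset

namespace SimpleGraph

variable {V : Type*} [Fintype V]

lemma IsAcyclic.card_edgeFinset_le {G : SimpleGraph V} [Fintype G.edgeSet]
    (hG : G.IsAcyclic) : #G.edgeFinset ≤ Fintype.card V := by
  classical
  cases isEmpty_or_nonempty V
  · simp [Finset.eq_empty_iff_forall_notMem]
  obtain ⟨T, hGT, -, hT⟩ := connected_top.exists_isTree_le_of_le_of_isAcyclic le_top hG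
  calc #G.edgeFinset ≤ #T.edgeFinset := card_le_card (edgeFinset_mono hGT)
    _ ≤ Fintype.card V := by rw [← hT.card_edgeFinset]; omega

variable [DecidableEq V]

lemma sum_card_neighborFinset_inter_eq_sum_degree_induce (G : SimpleGraph V)
    [DecidableRel G.Adj] (S : Finset V) :
    ∑ v ∈ S, #(G.neighborFinset v ∩ S) = ∑ v, (G.induce (S : Set V)).degree v := by
  rw [← sum_coe_sort S]
  refine Fintype.sum_congr _ _ fun v => ?_
  rw [← card_neighborFinset_eq_degree, ← card_map (.subtype _)]
  congr 1
  ext w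
  simp [and_comm]

lemma IsAcyclic.sum_card_neighborFinset_inter_le {G : SimpleGraph V} [DecidableRel G.Adj]
    (hG : G.IsAcyclic) (S : Finset V) :
    ∑ v ∈ S, #(G.neighborFinset v ∩ S) ≤ 2 * #S := by
  rw [sum_card_neighborFinset_inter_eq_sum_degree_induce, sum_degrees_eq_twice_card_edges]
  simpa using (hG.induce (S : Set V)).card_edgeFinset_le

end SimpleGraph

section Peeling

variable {V : Type*} [Fintype V] [DecidableEq V] {G : SimpleGraph V} [DecidableRel G.Adj]

lemma HasArboricityAtMost.sum_card_neighborFinset_inter_le {lam : ℕ}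
    (hG : HasArboricityAtMost G lam) (S : Finset V) :
    ∑ v ∈ S, #(G.neighborFinset v ∩ S) ≤ 2 * lam * #S := by
  classical
  obtain ⟨F, hF, -, hcover⟩ := hG
  have hsub (v : V) :
      G.neighborFinset v ∩ S ⊆ univ.biUnion fun i => (F i).neighborFinset v ∩ S := by
    intro w hw
    simp only [mem_inter, SimpleGraph.mem_neighborFinset] at hw
    obtain ⟨i, hi, -⟩ := hcover s(v, w) hw.1
    simp only [mem_biUnion, mem_univ, mem_inter, SimpleGraph.mem_neighborFinset, true_and]
    exact ⟨i, hi, hw.2⟩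
  calc ∑ v ∈ S, #(G.neighborFinset v ∩ S)
      ≤ ∑ v ∈ S, ∑ i, #((F i).neighborFinset v ∩ S) :=
        sum_le_sum fun v _ => (card_le_card (hsub v)).trans card_biUnion_le
    _ = ∑ i, ∑ v ∈ S, #((F i).neighborFinset v ∩ S) := sum_comm
    _ ≤ ∑ _i : Fin lam, 2 * #S := sum_le_sum fun i _ => (hF i).sum_card_neighborFinset_inter_le S
    _ = 2 * lam * #S := by rw [sum_const, card_univ, Fintype.card_fin, smul_eq_mul]; ring

lemma mul_card_peel_succ_le_sum (d i : ℕ) :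
    d * #(peel G d (i + 1)) ≤ ∑ v ∈ peel G d i, #(G.neighborFinset v ∩ peel G d i) :=
  calc d * #(peel G d (i + 1))
      ≤ ∑ v ∈ peel G d (i + 1), #(G.neighborFinset v ∩ peel G d i) := by
        rw [mul_comm, ← smul_eq_mul]
        exact card_nsmul_le_sum _ _ _ fun v hv => (mem_filter.1 hv).2.le
    _ ≤ ∑ v ∈ peel G d i, #(G.neighborFinset v ∩ peel G d i) :=
        sum_le_sum_of_subset (filter_subset _ _)

lemma HasArboricityAtMost.card_peel_succ_le {lam d : ℕ} (hG : HasArboricityAtMost G lam)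
    (hd : 0 < d) (i : ℕ) :
    (#(peel G d (i + 1)) : ℝ) ≤ 2 * lam / d * #(peel G d i) := by
  have h : d * #(peel G d (i + 1)) ≤ 2 * lam * #(peel G d i) :=
    (mul_card_peel_succ_le_sum d i).trans (hG.sum_card_neighborFinset_inter_le _)
  rw [div_mul_eq_mul_div, le_div_iff₀ (by exact_mod_cast hd), mul_comm]
  exact_mod_cast h

end Peeling

/-- for a graph on `n` vertices with arboricity at most `lam` and
`d > 2 * lam`, the number of vertices in layers of index at least `i+1` (1-indexed),
i.e. `|peel G d i|`, is at most `n * (2 * lam / d) ^ i`. -/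
theorem H_partition_layer_size {V : Type*} [Fintype V] [DecidableEq V]
    (G : SimpleGraph V) [DecidableRel G.Adj] (n lam d : ℕ)
    (hn : n = Fintype.card V)
    (harb : HasArboricityAtMost G lam) (hd : 2 * lam < d) :
    ∀ i : ℕ, ((peel G d i).card : ℝ) ≤ (n : ℝ) * ((2 * lam : ℝ) / d) ^ i := by
  intro i
  induction i with
  | zero => simp [peel, hn]
  | succ i ih =>
    calc (#(peel G d (i + 1)) : ℝ)
        ≤ 2 * lam / d * #(peel G d i) := harb.card_peel_succ_le (by omega) i
      _ ≤ 2 * lam / d * (n * (2 * lam / d) ^ i) := by gcongr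
      _ = n * (2 * lam / d) ^ (i + 1) := by ring
end

section
/- In the selection phase of the matching algorithm, the set of selected edges forms a matching: no two selected edges share an endpoint. -/
/-- In the selection phase of the matching algorithm, the set of selected
edges forms a matching. Edges are oriented from lower to higher layers; each vertex
marks at most one outgoing edge (`mark u = some v`); each vertex proposes at most one
of its marked incoming edges (`propose v = some u`, which requires `mark u = some v`).
Processing layers from highest to lowest, a proposed edge `(u,v)` is selected iff the
outgoing edge marked by its higher endpoint `v` (processed earlier) was not selected;
this is the characterization `hsel`. Then no two distinct selected edges share an
endpoint. -/
theorem matching_selection_is_matching {V : Type*}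
    (layer : V → ℕ) (mark propose : V → Option V)
    (hmark : ∀ u v, mark u = some v → layer u < layer v)
    (hprop : ∀ v u, propose v = some u → mark u = some v)
    (selected : Set (V × V))
    (hsel : ∀ u v, (u, v) ∈ selected ↔
      propose v = some u ∧ ∀ w, mark v = some w → (v, w) ∉ selected) :
    ∀ u v u' v', (u, v) ∈ selected → (u', v') ∈ selected → (u, v) ≠ (u', v') →
      u ≠ u' ∧ u ≠ v' ∧ v ≠ u' ∧ v ≠ v' := by
  intro u v u' v' h1 h2 hne
  obtain ⟨hp1, hb1⟩ := (hsel u v).1 h1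
  obtain ⟨hp2, hb2⟩ := (hsel u' v').1 h2
  have hvv' : v ≠ v' := by
    rintro rfl
    exact hne (by rw [Option.some_inj.1 (hp1.symm.trans hp2)])
  refine ⟨?_, ?_, ?_, hvv'⟩
  · rintro rfl
    have h3 := hprop v u hp1
    have h4 := hprop v' u hp2
    exact hvv' (Option.some_inj.1 (h3.symm.trans h4))
  · rintro rfl
    -- u = v' : (u', u) selected, propose u = some u', (u,v) selected, mark u = some v
    exact hb2 v (hprop v u hp1) h1
  · rintro rfl
    -- v = u' : (v, v') selected, propose v' = some v so mark v = some v'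
    exact hb1 v' (hprop v' v hp2) h2
end

section
/- In the selection phase of the independent set algorithm, the set of selected vertices forms an independent set: no two selected vertices are adjacent. -/
/-- In the selection phase of the independent set algorithm, the set of
selected vertices forms an independent set. A vertex is proposed iff it is marked and
no same-layer neighbor is marked, so no two adjacent same-layer vertices are both
proposed (`hprop`). Processing layers from highest to lowest, a proposed vertex is
selected iff no selected higher-layer neighbor removed it earlier; this is the
characterization `hsel`. Then no two selected vertices are adjacent. -/
theorem mis_selection_is_independent {V : Type*} (G : SimpleGraph V)
    (layer : V → ℕ) (proposed : Set V)
    (hprop : ∀ u v, G.Adj u v → layer u = layer v → ¬(u ∈ proposed ∧ v ∈ proposed))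
    (selected : Set V)
    (hsel : ∀ v, v ∈ selected ↔
      v ∈ proposed ∧ ∀ u, G.Adj v u → layer v < layer u → u ∉ selected) :
    ∀ u v, u ∈ selected → v ∈ selected → ¬ G.Adj u v := by
  intro u v hu hv hadj
  rcases lt_trichotomy (layer u) (layer v) with h | h | h
  · exact ((hsel u).1 hu).2 v hadj h hv
  · exact hprop u v hadj h ⟨((hsel u).1 hu).1, ((hsel v).1 hv).1⟩
  · exact ((hsel v).1 hv).2 u hadj.symm h hu
end

section
/- In the matching algorithm's selection phase, if a vertex v has at least one incoming edge that was proposed, then at least one edge incident to v (not necessarily incoming) is selected into the matching. -/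
/-- In the matching algorithm's selection phase (same setting as the
selection correctness statement: oriented edges from lower to higher layers, `mark`
marks at most one outgoing edge per vertex, `propose` proposes at most one marked
incoming edge per vertex, and `selected` satisfies the selection characterization),
if a vertex `v` has at least one incoming edge that was proposed, then at least one
edge incident to `v` (not necessarily incoming) is selected into the matching. -/
theorem proposed_implies_incident_selected {V : Type*}
    (layer : V → ℕ) (mark propose : V → Option V)
    (hmark : ∀ u v, mark u = some v → layer u < layer v)
    (hprop : ∀ v u, propose v = some u → mark u = some v)
    (selected : Set (V × V))
    (hsel : ∀ u v, (u, v) ∈ selected ↔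
      propose v = some u ∧ ∀ w, mark v = some w → (v, w) ∉ selected) :
    ∀ v u, propose v = some u →
      ∃ a b, (a, b) ∈ selected ∧ (a = v ∨ b = v) := by
  intro v u hpv
  by_cases h : (u, v) ∈ selected
  · exact ⟨u, v, h, Or.inr rfl⟩
  · have := (hsel u v).not.mp h
    push_neg at this
    obtain ⟨w, hw, hws⟩ := this hpv
    exact ⟨v, w, hws, Or.inl rfl⟩
end

section
/- Let X = Σ_{i=1}^{N} X_i where each X_i is a Bernoulli random variable and the dependency graph of (X_i) has maximum degree at most d (each X_i is independent of all but at most d of the others). If E[X] = μ, then Pr[X ≤ μ/2] ≤ e^{-Ω(μ/d)}. -/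
/-!
Colour the dependency graph greedily with `d + 1` colours. The events of one colour class are
pairwise non-adjacent, hence mutually independent, so the count `S k` of a class satisfies the
Bernoulli bound `E[exp (-S k)] ≤ exp (-(1 - e⁻¹) μₖ)`. Hölder's inequality with `d + 1` equal
exponents handles the dependence between classes:
`E[exp (-X / (d + 1))] ≤ ∏ₖ E[exp (-S k)] ^ (1 / (d + 1)) ≤ exp (-(1 - e⁻¹) μ / (d + 1))`,
and the exponential Markov inequality gives
`P[X ≤ μ / 2] ≤ exp (-(1 / 2 - e⁻¹) μ / (d + 1)) ≤ exp (-μ / (16 d))`.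
-/

open MeasureTheory ProbabilityTheory Finset Real

theorem sum_indicator_one_mem_Icc {ι Ω : Type*} [Fintype ι] (A : ι → Set Ω) (ω : Ω) :
    ∑ i, (A i).indicator (fun _ => (1 : ℝ)) ω ∈ Set.Icc 0 (Fintype.card ι : ℝ) := by
  refine ⟨sum_nonneg fun i _ => Set.indicator_nonneg (fun _ _ => zero_le_one) ω, ?_⟩
  simpa using sum_le_sum fun i (_ : i ∈ (univ : Finset ι)) =>
    Set.indicator_le_self' (fun _ _ => zero_le_one (α := ℝ)) ω

section

variable {Ω : Type*} [MeasurableSpace Ω] {μ : Measure Ω}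

theorem mgf_sum_le_prod_mgf_rpow {ι : Type*} {X : ι → Ω → ℝ} {s : Finset ι} (hs : s.Nonempty)
    (t : ℝ) (hX : ∀ i ∈ s, AEMeasurable (X i) μ)
    (hint : ∀ i ∈ s, Integrable (fun ω => exp (t * X i ω)) μ) :
    mgf (∑ i ∈ s, X i) μ (t / #s) ≤ ∏ i ∈ s, mgf (X i) μ t ^ (#s : ℝ)⁻¹ := by
  set p : ℝ := (#s : ℝ)⁻¹ with hp_def
  have hp : 0 ≤ p := by positivity
  have hsum : ∑ _i ∈ s, p = 1 := by
    rw [sum_const, nsmul_eq_mul]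
    exact mul_inv_cancel₀ (by exact_mod_cast hs.card_pos.ne')
  have hsplit : ∀ ω, ENNReal.ofReal (exp (t / #s * (∑ i ∈ s, X i) ω))
      = ∏ i ∈ s, ENNReal.ofReal (exp (t * X i ω)) ^ p := by
    intro ω
    simp_rw [ENNReal.ofReal_rpow_of_pos (exp_pos _), ← exp_mul]
    rw [← ENNReal.ofReal_prod_of_nonneg fun _ _ => (exp_pos _).le, ← exp_sum, Finset.sum_apply,
      mul_sum]
    congr 2
    exact sum_congr rfl fun i _ => by rw [hp_def]; ring
  have hmgf : ∀ i ∈ s,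
      ∫⁻ ω, ENNReal.ofReal (exp (t * X i ω)) ∂μ = ENNReal.ofReal (mgf (X i) μ t) :=
    fun i hi => (ofReal_integral_eq_lintegral_ofReal (hint i hi)
      (ae_of_all _ fun _ => (exp_pos _).le)).symm
  rw [← ENNReal.ofReal_le_ofReal_iff (prod_nonneg fun _ _ => rpow_nonneg mgf_nonneg _),
    ENNReal.ofReal_prod_of_nonneg (fun _ _ => rpow_nonneg mgf_nonneg _), mgf,
    integral_eq_lintegral_of_nonneg_ae (ae_of_all _ fun _ => (exp_pos _).le) (by fun_prop)]
  calc ENNReal.ofReal (∫⁻ ω, ENNReal.ofReal (exp (t / #s * (∑ i ∈ s, X i) ω)) ∂μ).toReal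
      ≤ ∫⁻ ω, ENNReal.ofReal (exp (t / #s * (∑ i ∈ s, X i) ω)) ∂μ := ENNReal.ofReal_toReal_le
    _ = ∫⁻ ω, ∏ i ∈ s, ENNReal.ofReal (exp (t * X i ω)) ^ p ∂μ := lintegral_congr hsplit
    _ ≤ ∏ i ∈ s, (∫⁻ ω, ENNReal.ofReal (exp (t * X i ω)) ∂μ) ^ p :=
      ENNReal.lintegral_prod_norm_pow_le s (fun i hi => by fun_prop) hsum fun _ _ => hp
    _ = ∏ i ∈ s, ENNReal.ofReal (mgf (X i) μ t ^ p) := prod_congr rfl fun i hi => by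
      rw [hmgf i hi, ENNReal.ofReal_rpow_of_nonneg mgf_nonneg hp]

variable [IsProbabilityMeasure μ]

theorem mgf_indicator_one {A : Set Ω} (hA : MeasurableSet A) (t : ℝ) :
    mgf (A.indicator fun _ => (1 : ℝ)) μ t = 1 + (exp t - 1) * μ.real A := by
  have hexp : (fun ω => exp (t * A.indicator (fun _ => (1 : ℝ)) ω))
      = fun ω => 1 + A.indicator (fun _ => exp t - 1) ω := by
    ext ω
    by_cases hω : ω ∈ A <;> simp [hω]
  rw [mgf, hexp, integral_add (integrable_const _) ((integrable_const _).indicator hA),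
    integral_const, integral_indicator_const _ hA]
  simp [mul_comm]

theorem ProbabilityTheory.iIndepSet.mgf_sum_indicator_le {ι : Type*} [Fintype ι] {A : ι → Set Ω}
    (h : iIndepSet A μ) (hA : ∀ i, MeasurableSet (A i)) (t : ℝ) :
    mgf (∑ i, (A i).indicator fun _ => (1 : ℝ)) μ t ≤ exp ((exp t - 1) * ∑ i, μ.real (A i)) := by
  rw [h.iIndepFun_indicator.mgf_sum (fun i => measurable_const.indicator (hA i)), mul_sum, exp_sum]
  refine prod_le_prod (fun i _ => mgf_nonneg) fun i _ => ?_
  rw [mgf_indicator_one (hA i), add_comm]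
  exact add_one_le_exp _

end

theorem SimpleGraph.colorable_succ_of_forall_degree_le {V : Type*} [Fintype V]
    {G : SimpleGraph V} [DecidableRel G.Adj] {d : ℕ} (h : ∀ v, G.degree v ≤ d) :
    G.Colorable (d + 1) := by
  classical
  suffices ∀ s : Finset V, ∃ C : V → Fin (d + 1), ∀ v ∈ s, ∀ w ∈ s, G.Adj v w → C v ≠ C w by
    obtain ⟨C, hC⟩ := this univ
    exact ⟨Coloring.mk C fun hvw => hC _ (mem_univ _) _ (mem_univ _) hvw⟩
  intro s
  induction s using Finset.induction_on with
  | empty => exact ⟨0, by simp⟩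
  | insert v s hv ih =>
    obtain ⟨C, hC⟩ := ih
    have hcard : #((G.neighborFinset v).image C) < #(univ : Finset (Fin (d + 1))) := by
      rw [card_univ, Fintype.card_fin]
      exact Nat.lt_succ_of_le (card_image_le.trans (h v))
    obtain ⟨c, -, hc⟩ := exists_mem_notMem_of_card_lt_card hcard
    have hfree : ∀ w, G.Adj v w → C w ≠ c := fun w hw hwc =>
      hc (mem_image.2 ⟨w, (G.mem_neighborFinset v w).2 hw, hwc⟩)
    refine ⟨Function.update C v c, ?_⟩
    intro x hx y hy hxy
    simp only [Function.update_apply]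
    split_ifs with hxv hyv hyv
    · subst hxv hyv
      exact (G.irrefl hxy).elim
    · exact (hfree y (hxv ▸ hxy)).symm
    · exact hfree x (hyv ▸ hxy.symm)
    · exact hC x ((mem_insert.1 hx).resolve_left hxv) y ((mem_insert.1 hy).resolve_left hyv) hxy

def IsDependencyGraph {ι Ω : Type*} [MeasurableSpace Ω] (D : SimpleGraph ι) (A : ι → Set Ω)
    (μ : Measure Ω) : Prop :=
  ∀ (i : ι) (S : Finset ι), i ∉ S → (∀ j ∈ S, ¬ D.Adj i j) → IndepSet (A i) (⋂ j ∈ S, A j) μ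

namespace IsDependencyGraph

variable {ι Ω : Type*} [MeasurableSpace Ω] {μ : Measure Ω} [IsProbabilityMeasure μ]
  {D : SimpleGraph ι} {A : ι → Set Ω}

theorem measure_biInter_eq_prod (h : IsDependencyGraph D A μ) {S : Finset ι}
    (hS : D.IsIndepSet (S : Set ι)) : μ (⋂ j ∈ S, A j) = ∏ j ∈ S, μ (A j) := by
  classical
  induction S using Finset.induction_on with
  | empty => simp
  | insert i S hi ih =>
    rw [coe_insert, SimpleGraph.IsIndepSet, Set.pairwise_insert] at hS
    have hnonadj : ∀ j ∈ S, ¬ D.Adj i j := fun j hj =>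
      (hS.2 j hj (ne_of_mem_of_not_mem hj hi).symm).1
    rw [set_biInter_insert, prod_insert hi, (h i S hi hnonadj).measure_inter_eq_mul, ih hS.1]

theorem iIndepSet_of_isIndepSet (h : IsDependencyGraph D A μ) (hA : ∀ i, MeasurableSet (A i))
    {T : Set ι} (hT : D.IsIndepSet T) : ProbabilityTheory.iIndepSet (fun i : T => A i) μ := by
  classical
  refine (iIndepSet_iff_meas_biInter (f := fun i : T => A i) fun i => hA i).2 fun s => ?_
  have := h.measure_biInter_eq_prod (S := s.map (Function.Embedding.subtype _))
    (hT.mono (by simp))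
  simpa [set_biInter_finset_image] using this

theorem mgf_sum_indicator_le [Fintype ι] {α : Type*} [Fintype α] [Nonempty α]
    (h : IsDependencyGraph D A μ) (hA : ∀ i, MeasurableSet (A i)) (C : D.Coloring α) :
    mgf (∑ i, (A i).indicator fun _ => (1 : ℝ)) μ (-1 / Fintype.card α)
      ≤ exp (-(1 - exp (-1)) * (∑ i, μ.real (A i)) / Fintype.card α) := by
  classical
  set S : α → Ω → ℝ := fun k => ∑ j : C.colorClass k, (A j).indicator fun _ => 1
  have hfiber : ∑ i, (A i).indicator (fun _ => (1 : ℝ)) = ∑ k, S k := by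
    ext ω
    simp only [Finset.sum_apply, S]
    exact (Fintype.sum_fiberwise C _).symm
  have hmass : ∑ i, μ.real (A i) = ∑ k, ∑ j : C.colorClass k, μ.real (A j) :=
    (Fintype.sum_fiberwise C _).symm
  have hclass (k : α) :
      mgf (S k) μ (-1) ≤ exp ((exp (-1) - 1) * ∑ j : C.colorClass k, μ.real (A j)) :=
    (h.iIndepSet_of_isIndepSet hA (C.isIndepSet_colorClass k)).mgf_sum_indicator_le
      (fun j => hA j) (-1)
  have hmeas (k : α) : Measurable (S k) := by fun_prop (disch := exact hA _)
  have hint (k : α) : Integrable (fun ω => exp (-1 * S k ω)) μ :=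
    integrable_exp_mul_of_mem_Icc (hmeas k).aemeasurable (ae_of_all _ fun ω => by
      simpa [S, Finset.sum_apply] using
        sum_indicator_one_mem_Icc (fun j : C.colorClass k => A j) ω)
  rw [hfiber, ← card_univ]
  calc mgf (∑ k, S k) μ (-1 / #univ) ≤ ∏ k, mgf (S k) μ (-1) ^ (#(univ : Finset α) : ℝ)⁻¹ :=
      mgf_sum_le_prod_mgf_rpow univ_nonempty (-1) (fun k _ => (hmeas k).aemeasurable)
        fun k _ => hint k
    _ ≤ ∏ k, exp ((exp (-1) - 1) * ∑ j : C.colorClass k, μ.real (A j))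
          ^ (#(univ : Finset α) : ℝ)⁻¹ :=
      prod_le_prod (fun _ _ => rpow_nonneg mgf_nonneg _)
        fun k _ => rpow_le_rpow mgf_nonneg (hclass k) (by positivity)
    _ = exp (-(1 - exp (-1)) * (∑ i, μ.real (A i)) / #(univ : Finset α)) := by
      simp_rw [← exp_mul, ← exp_sum, hmass, mul_sum, sum_mul, sum_div]
      congr 1
      exact sum_congr rfl fun k _ => sum_congr rfl fun j _ => by ring

theorem measure_sum_indicator_le_le [Fintype ι] {α : Type*} [Fintype α] [Nonempty α]
    (h : IsDependencyGraph D A μ) (hA : ∀ i, MeasurableSet (A i)) (C : D.Coloring α) (ε : ℝ) :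
    μ {ω | ∑ i, (A i).indicator (fun _ => (1 : ℝ)) ω ≤ ε}
      ≤ ENNReal.ofReal (exp ((ε - (1 - exp (-1)) * ∑ i, μ.real (A i)) / Fintype.card α)) := by
  have hm : (0 : ℝ) < Fintype.card α := by exact_mod_cast Fintype.card_pos
  have hint : Integrable (fun ω => exp (-1 / Fintype.card α *
      (∑ i, (A i).indicator fun _ => (1 : ℝ)) ω)) μ :=
    integrable_exp_mul_of_mem_Icc (by fun_prop (disch := exact hA _))
      (ae_of_all _ fun ω => by simpa [Finset.sum_apply] using sum_indicator_one_mem_Icc A ω)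
  have hchernoff := measure_le_le_exp_mul_mgf ε (by simp [div_nonpos_iff, hm.le]) hint
  simp only [Finset.sum_apply] at hchernoff
  rw [← ofReal_measureReal]
  refine ENNReal.ofReal_le_ofReal (hchernoff.trans ?_)
  grw [h.mgf_sum_indicator_le hA C, ← exp_add]
  exact (congrArg exp (by ring)).le

end IsDependencyGraph

/-- Chernoff bound under bounded dependence. Let `X = Σ_i X_i` where
`X_i` is the indicator of the event `A i`, and suppose there is a dependency graph `D`
of maximum degree at most `d`: each `A i` is independent of the family of events at
its non-neighbors. If `E[X] = μX`, then `Pr[X ≤ μX / 2] ≤ exp (-Ω(μX / d))`. -/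
theorem chernoff_bounded_dependence :
    ∃ c : ℝ, 0 < c ∧
      ∀ (N d : ℕ), 1 ≤ d →
      ∀ (Ω : Type) [MeasurableSpace Ω] (μ : Measure Ω) [IsProbabilityMeasure μ]
        (A : Fin N → Set Ω), (∀ i, MeasurableSet (A i)) →
      ∀ (D : SimpleGraph (Fin N)) [DecidableRel D.Adj],
        (∀ i, D.degree i ≤ d) →
        (∀ (i : Fin N) (S : Finset (Fin N)), i ∉ S → (∀ j ∈ S, ¬ D.Adj i j) →
          IndepSet (A i) (⋂ j ∈ S, A j) μ) →
        μ {ω | ∑ i, (A i).indicator (fun _ => (1 : ℝ)) ω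
                 ≤ (∑ i, (μ (A i)).toReal) / 2}
          ≤ ENNReal.ofReal (Real.exp (-(c * (∑ i, (μ (A i)).toReal) / d))) := by
  refine ⟨1 / 16, by norm_num, fun N d hd Ω _ μ _ A hA D _ hdeg hdep => ?_⟩
  obtain ⟨C⟩ := D.colorable_succ_of_forall_degree_le hdeg
  refine (IsDependencyGraph.measure_sum_indicator_le_le hdep hA C _).trans
    (ENNReal.ofReal_le_ofReal (exp_le_exp.2 ?_))
  have hd' : (1 : ℝ) ≤ d := by exact_mod_cast hd
  have he : exp (-1) ≤ 3 / 8 := exp_neg_one_lt_d9.le.trans (by norm_num)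
  have hM : 0 ≤ ∑ i, μ.real (A i) := by positivity
  rw [Fintype.card_fin, Nat.cast_add_one, div_le_iff₀ (by positivity)]
  calc (∑ i, μ.real (A i)) / 2 - (1 - exp (-1)) * ∑ i, μ.real (A i)
      ≤ -((∑ i, μ.real (A i)) / 8) := by nlinarith
    _ ≤ -(1 / 16 * (∑ i, μ.real (A i)) / d) * (d + 1) := by
      rw [neg_mul, neg_le_neg_iff, div_mul_eq_mul_div, div_le_iff₀ (by positivity)]
      nlinarith
end
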